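/- arXiv:1007.2246 — 4 statements merged into one kernel-verified Lean document; each statement's English description precedes it below -/
import Mathlib

section
/- For all integers n ≥ 0 and real x, the Hermite polynomials satisfy H_{2n}(x) = (-1)^n 2^{2n} n! L_n^{(-1/2)}(x^2), where L_n^{(α)} denotes the generalized Laguerre polynomial. -/
/-- Physicists' Hermite polynomials. -/
noncomputable def H : ℕ → ℝ → ℝ
  | 0, _ => 1
  | 1, x => 2 * x
  | (n + 2), x => 2 * x * H (n + 1) x - 2 * (n + 1) * H n x

/-- Generalized Laguerre polynomial `L_n^{(α)}`. -/
noncomputable def lag (α : ℝ) (n : ℕ) (x : ℝ) : ℝ :=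
  ∑ k ∈ Finset.range (n + 1),
    (-1) ^ k * (Real.Gamma (n + α + 1) / (Real.Gamma (k + α + 1) * (Nat.factorial (n - k)))) *
      x ^ k / (Nat.factorial k)

/-!
Together with `H_{2n}` one proves `H_{2n+1}(x) = (-1)^n 2^{2n+1} n! x L_n^{(1/2)}(x^2)`,
by induction on `n`. In the variable `t = x^2` the Hermite recurrence then reduces to the
contiguous relations
`t L_n^{(α+1)} = (n+α+1) L_n^{(α)} - (n+1) L_{n+1}^{(α)}` and
`L_{n+1}^{(α+1)} = L_{n+1}^{(α)} + L_n^{(α+1)}` at `α = -1/2`; coefficientwise these are the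
absorption identity and Pascal's rule for the generalized binomial coefficients `C(n+α, n-k)`.
-/

open Finset Real Nat

lemma Finset.sum_range_succ_eq_sub_of_shift {M : Type*} [AddCommGroup M] (f g h : ℕ → M)
    (n : ℕ) (h_zero : h 0 = g 0) (h_lt : ∀ k < n, f k = h (k + 1) - g (k + 1))
    (h_last : f n = -g (n + 1)) :
    ∑ k ∈ range (n + 1), f k = ∑ k ∈ range (n + 1), h k - ∑ k ∈ range (n + 2), g k := by
  rw [sum_range_succ, sum_range_succ' h, sum_range_succ' g, sum_range_succ,
    sum_congr rfl fun k hk => h_lt k (mem_range.mp hk), sum_sub_distrib, h_zero, h_last]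
  abel

/-- The generalized binomial coefficient `C(n+α, n-k)` appearing in `lag α n`. -/
noncomputable def lagBinom (α : ℝ) (n k : ℕ) : ℝ :=
  Gamma (n + α + 1) / (Gamma (k + α + 1) * (n - k)!)

lemma lag_eq_sum (α : ℝ) (n : ℕ) (x : ℝ) :
    lag α n x = ∑ k ∈ range (n + 1), (-1) ^ k * lagBinom α n k * x ^ k / k ! := rfl

section lagBinom

variable {α : ℝ} (hα : -1 < α)
include hα

lemma Gamma_natCast_add_add_one_ne_zero (k : ℕ) : Gamma (k + α + 1) ≠ 0 :=
  (Gamma_pos_of_pos (by linarith [k.cast_nonneg (α := ℝ)])).ne'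

lemma lagBinom_self (n : ℕ) : lagBinom α n n = 1 := by
  simp [lagBinom, Gamma_natCast_add_add_one_ne_zero hα]

lemma lagBinom_succ_pascal {n k : ℕ} (hk : k ≤ n) :
    lagBinom (α + 1) (n + 1) k = lagBinom α (n + 1) k + lagBinom (α + 1) n k := by
  have h_top : Gamma (n + α + 3) = (n + α + 2) * Gamma (n + α + 2) := by
    rw [← Gamma_add_one (by linarith [n.cast_nonneg (α := ℝ)])]; ring_nf
  have h_bot : Gamma (k + α + 2) = (k + α + 1) * Gamma (k + α + 1) := by
    rw [← Gamma_add_one (by linarith [k.cast_nonneg (α := ℝ)])]; ring_nf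
  have hk' : ((n - k : ℕ) : ℝ) = n - k := Nat.cast_sub hk
  have hΓ := Gamma_natCast_add_add_one_ne_zero hα k
  have hk_pos : (0 : ℝ) < k + α + 1 := by linarith [k.cast_nonneg (α := ℝ)]
  have hnk : (n : ℝ) - k + 1 ≠ 0 := by linarith [(Nat.cast_le (α := ℝ)).mpr hk]
  simp only [lagBinom, Nat.succ_sub hk, factorial_succ]
  push_cast [hk']
  rw [show (n : ℝ) + 1 + (α + 1) + 1 = n + α + 3 by ring,
    show (k : ℝ) + (α + 1) + 1 = k + α + 2 by ring,
    show (n : ℝ) + 1 + α + 1 = n + α + 2 by ring,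
    show (n : ℝ) + (α + 1) + 1 = n + α + 2 by ring,
    h_top, h_bot]
  field_simp
  ring

lemma natCast_add_one_sub_mul_lagBinom_succ {n k : ℕ} (hk : k ≤ n) :
    ((n : ℝ) + 1 - k) * lagBinom α (n + 1) k = (n + α + 1) * lagBinom α n k := by
  have h_top : Gamma (n + α + 2) = (n + α + 1) * Gamma (n + α + 1) := by
    rw [← Gamma_add_one (by linarith [n.cast_nonneg (α := ℝ)])]; ring_nf
  have hk' : ((n - k : ℕ) : ℝ) = n - k := Nat.cast_sub hk
  have hΓ := Gamma_natCast_add_add_one_ne_zero hα k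
  have hnk : (n : ℝ) - k + 1 ≠ 0 := by linarith [(Nat.cast_le (α := ℝ)).mpr hk]
  simp only [lagBinom, Nat.succ_sub hk, factorial_succ]
  push_cast [hk']
  rw [show (n : ℝ) + 1 + α + 1 = n + α + 2 by ring, h_top]
  field_simp
  ring

end lagBinom

lemma lagBinom_add_one (α : ℝ) (n k : ℕ) :
    lagBinom (α + 1) n k = lagBinom α (n + 1) (k + 1) := by
  simp only [lagBinom, Nat.add_sub_add_right]
  push_cast
  ring_nf

section lag

variable {α : ℝ} (hα : -1 < α)
include hα

lemma lag_zero (x : ℝ) : lag α 0 x = 1 := by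
  simp [lag_eq_sum, lagBinom_self hα]

lemma lag_add_one_succ (n : ℕ) (x : ℝ) :
    lag (α + 1) (n + 1) x = lag α (n + 1) x + lag (α + 1) n x := by
  simp only [lag_eq_sum]
  rw [sum_range_succ, sum_range_succ _ (n + 1), lagBinom_self (by linarith), lagBinom_self hα,
    add_right_comm, ← sum_add_distrib]
  congr 1
  refine sum_congr rfl fun k hk => ?_
  rw [lagBinom_succ_pascal hα (Nat.lt_succ_iff.mp (mem_range.mp hk))]
  ring

lemma mul_lag_add_one (n : ℕ) (x : ℝ) :
    x * lag (α + 1) n x = (n + α + 1) * lag α n x - (n + 1) * lag α (n + 1) x := by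
  simp only [lag_eq_sum, mul_sum]
  apply sum_range_succ_eq_sub_of_shift
  · have h := natCast_add_one_sub_mul_lagBinom_succ hα (Nat.zero_le n)
    push_cast at h
    simp only [pow_zero, factorial_zero, cast_one, div_one, mul_one, one_mul, sub_zero] at h ⊢
    linarith
  · intro k hk
    have h := natCast_add_one_sub_mul_lagBinom_succ hα (show k + 1 ≤ n from hk)
    rw [lagBinom_add_one, factorial_succ]
    push_cast at h ⊢
    have hfac : (k ! : ℝ) ≠ 0 := by positivity
    have hk1 : (k : ℝ) + 1 ≠ 0 := by positivity
    field_simp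
    linear_combination -(-1) ^ k * x ^ (k + 1) * h
  · rw [lagBinom_add_one, lagBinom_self hα, factorial_succ]
    push_cast
    field_simp
    ring

end lag

lemma H_add_two (n : ℕ) (x : ℝ) : H (n + 2) x = 2 * x * H (n + 1) x - 2 * (n + 1) * H n x := rfl

lemma H_two_mul_and_two_mul_add_one_eq_lag (n : ℕ) (x : ℝ) :
    H (2 * n) x = (-1) ^ n * 2 ^ (2 * n) * n ! * lag (-1/2) n (x ^ 2) ∧
      H (2 * n + 1) x = (-1) ^ n * 2 ^ (2 * n + 1) * n ! * x * lag (1/2) n (x ^ 2) := by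
  induction n with
  | zero =>
    simp only [lag_zero (show (-1 : ℝ) < -1/2 by norm_num),
      lag_zero (show (-1 : ℝ) < 1/2 by norm_num)]
    exact ⟨by norm_num [H], by norm_num [H]⟩
  | succ n ih =>
    obtain ⟨h_even, h_odd⟩ := ih
    have h_half : (-1/2 : ℝ) + 1 = 1/2 := by norm_num
    have h_mul := mul_lag_add_one (show (-1 : ℝ) < -1/2 by norm_num) n (x ^ 2)
    have h_pascal := lag_add_one_succ (show (-1 : ℝ) < -1/2 by norm_num) n (x ^ 2)
    rw [h_half] at h_mul h_pascal
    have h_even' : H (2 * (n + 1)) x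
        = (-1) ^ (n + 1) * 2 ^ (2 * (n + 1)) * (n + 1)! * lag (-1/2) (n + 1) (x ^ 2) := by
      rw [show 2 * (n + 1) = 2 * n + 2 by ring, H_add_two, h_even, h_odd]
      push_cast [factorial_succ]
      linear_combination (-1 : ℝ) ^ n * 2 ^ (2 * n + 2) * n ! * h_mul
    refine ⟨h_even', ?_⟩
    rw [show 2 * (n + 1) + 1 = 2 * n + 1 + 2 by ring, H_add_two, h_odd,
      show 2 * n + 1 + 1 = 2 * (n + 1) by ring, h_even']
    push_cast [factorial_succ]
    linear_combination (-1 : ℝ) ^ n * 2 ^ (2 * n + 3) * (n + 1) * n ! * x * h_pascal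

theorem hermite_even_eq_laguerre (n : ℕ) (x : ℝ) :
    H (2 * n) x = (-1) ^ n * 2 ^ (2 * n) * (Nat.factorial n) * lag (-1/2) n (x ^ 2) :=
  (H_two_mul_and_two_mul_add_one_eq_lag n x).1
end

section
/- For all integers k, ℓ ≥ 0 and real t, ∫_ℝ H_{2k}(x+t/2) H_{2ℓ}(x-t/2) e^{-(x+t/2)^2/2 - (x-t/2)^2/2} dx = e^{-t^2/4} √π Σ_{m=0}^{2 min(k,ℓ)} C(2k,m) C(2ℓ,m) m! (-2)^m t^{2k+2ℓ-2m}. -/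
open Real MeasureTheory Finset Polynomial
open scoped Nat

lemma H_succ (n : ℕ) (x : ℝ) : H (n + 1) x = 2 * x * H n x - 2 * n * H (n - 1) x := by
  cases n with
  | zero => simp [H]
  | succ n => simp [H]

lemma hasDerivAt_H (n : ℕ) (x : ℝ) : HasDerivAt (H n) (2 * n * H (n - 1) x) x := by
  induction n using Nat.twoStepInduction with
  | zero => simpa [H] using hasDerivAt_const x (1 : ℝ)
  | one => simpa [H] using (hasDerivAt_id x).const_mul (2 : ℝ)
  | more n ih₀ ih₁ =>
    have h := (((hasDerivAt_id x).const_mul 2).mul ih₁).sub (ih₀.const_mul (2 * (n + 1 : ℝ)))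
    rw [show H (n + 2) = fun y => 2 * y * H (n + 1) y - 2 * (n + 1) * H n y from rfl]
    refine h.congr_deriv ?_
    rw [show n + 2 - 1 = n + 1 from rfl, Nat.add_sub_cancel, H_succ n]
    simp only [id]; push_cast; ring

lemma exists_H_eq_eval (n : ℕ) : ∃ p : ℝ[X], ∀ x, H n x = p.eval x := by
  induction n using Nat.twoStepInduction with
  | zero => exact ⟨1, fun x => by simp [H]⟩
  | one => exact ⟨C 2 * X, fun x => by simp [H]⟩
  | more n ih₀ ih₁ =>
    obtain ⟨p, hp⟩ := ih₀
    obtain ⟨q, hq⟩ := ih₁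
    exact ⟨C 2 * X * q - C (2 * (n + 1 : ℝ)) * p, fun x => by simp [H, hp, hq]⟩

lemma integrable_eval_mul_exp_neg_sq (p : ℝ[X]) :
    Integrable fun x : ℝ => p.eval x * exp (-x ^ 2) := by
  simp_rw [eval_eq_sum_range, Finset.sum_mul]
  refine integrable_finsetSum _ fun i _ => ?_
  have h := (integrable_rpow_mul_exp_neg_mul_sq one_pos
    (by linarith [i.cast_nonneg (α := ℝ)] : (-1 : ℝ) < i)).const_mul (p.coeff i)
  simpa [Real.rpow_natCast, mul_assoc] using h

lemma integrable_H_mul_H_mul_exp (m n : ℕ) :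
    Integrable fun x : ℝ => H m x * H n x * exp (-x ^ 2) := by
  obtain ⟨p, hp⟩ := exists_H_eq_eval m
  obtain ⟨q, hq⟩ := exists_H_eq_eval n
  simpa [hp, hq] using integrable_eval_mul_exp_neg_sq (p * q)

lemma hasDerivAt_H_mul_exp (n : ℕ) (x : ℝ) :
    HasDerivAt (fun y => H n y * exp (-y ^ 2)) (-(H (n + 1) x * exp (-x ^ 2))) x := by
  refine ((hasDerivAt_H n x).mul ((hasDerivAt_pow 2 x).neg.exp)).congr_deriv ?_
  simp only [Pi.neg_apply, H_succ]; ring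

lemma integral_H_mul_H_succ_mul_exp (m n : ℕ) :
    ∫ x, H m x * H (n + 1) x * exp (-x ^ 2) =
      2 * m * ∫ x, H (m - 1) x * H n x * exp (-x ^ 2) := by
  have hparts := integral_mul_deriv_eq_deriv_mul_of_integrable
    (u := H m) (v := fun y => H n y * exp (-y ^ 2))
    (fun x _ => hasDerivAt_H m x) (fun x _ => hasDerivAt_H_mul_exp n x)
    (by simpa [Pi.mul_def, mul_assoc] using (integrable_H_mul_H_mul_exp m (n + 1)).neg)
    (by simpa [Pi.mul_def, mul_assoc] using
      (integrable_H_mul_H_mul_exp (m - 1) n).const_mul (2 * m : ℝ))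
    (by simpa [Pi.mul_def, mul_assoc] using integrable_H_mul_H_mul_exp m n)
  simp only [mul_neg, integral_neg, neg_inj] at hparts
  simpa only [mul_assoc, integral_const_mul] using hparts

lemma integral_H_mul_H_mul_exp (m n : ℕ) :
    ∫ x, H m x * H n x * exp (-x ^ 2) = if m = n then 2 ^ n * n ! * √π else 0 := by
  induction n generalizing m with
  | zero =>
    cases m with
    | zero => simpa [H] using integral_gaussian 1
    | succ m =>
      simp_rw [mul_comm (H (m + 1) _), integral_H_mul_H_succ_mul_exp]
      simp
  | succ n ih =>
    rw [integral_H_mul_H_succ_mul_exp]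
    cases m with
    | zero => simp
    | succ m =>
      rw [Nat.add_sub_cancel, ih]
      by_cases h : m = n
      · subst h
        simp [Nat.factorial_succ, pow_succ]
        ring
      · simp [h]

lemma H_add (n : ℕ) (x y : ℝ) :
    H n (x + y) = ∑ i ∈ range (n + 1), (n.choose i : ℝ) * (H i x * (2 * y) ^ (n - i)) := by
  induction n generalizing x with
  | zero => simp [H]
  | succ n ih =>
    have hderiv : 2 * n * H (n - 1) (x + y) =
        ∑ i ∈ range (n + 1),
          (n.choose i : ℝ) * (2 * i * H (i - 1) x * (2 * y) ^ (n - i)) := by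
      have hlhs := (hasDerivAt_H n (x + y)).comp_add_const x y
      have hrhs := HasDerivAt.fun_sum (u := range (n + 1)) fun i _ =>
        ((hasDerivAt_H i x).mul_const ((2 * y) ^ (n - i))).const_mul (n.choose i : ℝ)
      rw [funext ih] at hlhs
      exact hlhs.unique hrhs
    calc H (n + 1) (x + y)
        = 2 * (x + y) * H n (x + y) - 2 * n * H (n - 1) (x + y) := H_succ n _
      _ = ∑ i ∈ range (n + 1), (n.choose i : ℝ) * (H i x * (2 * y) ^ (n + 1 - i)) +
            ∑ i ∈ range (n + 1), (n.choose i : ℝ) * (H (i + 1) x * (2 * y) ^ (n - i)) := by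
        rw [ih, hderiv, mul_sum, ← sum_sub_distrib, ← sum_add_distrib]
        refine sum_congr rfl fun i hi => ?_
        rw [Nat.sub_add_comm (mem_range_succ_iff.mp hi), pow_succ, H_succ]
        ring
      _ = _ := (sum_choose_succ_mul (fun i j => H i x * (2 * y) ^ j) n).symm

lemma integral_H_add_mul_H_add_mul_exp (a b : ℕ) (u v : ℝ) :
    ∫ x, H a (x + u) * H b (x + v) * exp (-x ^ 2) =
      √π * ∑ i ∈ range (min a b + 1),
        (a.choose i : ℝ) * b.choose i * i ! * 2 ^ i * (2 * u) ^ (a - i) * (2 * v) ^ (b - i) := by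
  set c : ℕ → ℕ → ℝ := fun i j =>
    a.choose i * (2 * u) ^ (a - i) * (b.choose j * (2 * v) ^ (b - j))
  have hint (i j : ℕ) : Integrable fun x => c i j * (H i x * H j x * exp (-x ^ 2)) :=
    (integrable_H_mul_H_mul_exp i j).const_mul _
  calc ∫ x, H a (x + u) * H b (x + v) * exp (-x ^ 2)
      = ∫ x, ∑ i ∈ range (a + 1), ∑ j ∈ range (b + 1),
          c i j * (H i x * H j x * exp (-x ^ 2)) := by
        congr 1 with x
        rw [H_add, H_add, sum_mul_sum, sum_mul]
        refine sum_congr rfl fun i _ => ?_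
        rw [sum_mul]
        refine sum_congr rfl fun j _ => ?_
        ring
    _ = ∑ i ∈ range (a + 1), ∑ j ∈ range (b + 1),
          c i j * if i = j then 2 ^ j * j ! * √π else 0 := by
        rw [integral_finsetSum _ fun i _ => integrable_finsetSum _ fun j _ => hint i j]
        refine sum_congr rfl fun i _ => ?_
        rw [integral_finsetSum _ fun j _ => hint i j]
        refine sum_congr rfl fun j _ => ?_
        rw [integral_const_mul, integral_H_mul_H_mul_exp]
    _ = ∑ i ∈ range (a + 1) ∩ range (b + 1), c i i * (2 ^ i * i ! * √π) := by
        simp_rw [mul_ite, mul_zero, sum_ite_eq, sum_ite_mem]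
    _ = _ := by
        rw [range_inter_range, mul_sum, show min (a + 1) (b + 1) = min a b + 1 by omega]
        refine sum_congr rfl fun i _ => ?_
        ring

lemma neg_one_pow_sub_of_even {R : Type*} [Monoid R] [HasDistribNeg R] {n i : ℕ} (hn : Even n)
    (hi : i ≤ n) : (-1 : R) ^ (n - i) = (-1) ^ i :=
  calc (-1 : R) ^ (n - i) = (-1) ^ (n - i) * (-1) ^ (2 * i) := by simp [pow_mul]
    _ = (-1) ^ n * (-1) ^ i := by rw [← pow_add, ← pow_add]; congr 1; omega
    _ = (-1) ^ i := by rw [hn.neg_one_pow, one_mul]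

theorem hermite_shifted_product_integral (k l : ℕ) (t : ℝ) :
    ∫ x : ℝ,
        H (2 * k) (x + t / 2) * H (2 * l) (x - t / 2) *
          Real.exp (-(x + t / 2) ^ 2 / 2 - (x - t / 2) ^ 2 / 2) =
      Real.exp (-t ^ 2 / 4) * Real.sqrt Real.pi *
        ∑ m ∈ Finset.range (2 * min k l + 1),
          ((2 * k).choose m : ℝ) * ((2 * l).choose m : ℝ) * (Nat.factorial m) *
            (-2) ^ m * t ^ (2 * k + 2 * l - 2 * m) := by
  have hweight (x : ℝ) :
      exp (-(x + t / 2) ^ 2 / 2 - (x - t / 2) ^ 2 / 2) = exp (-t ^ 2 / 4) * exp (-x ^ 2) := by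
    rw [← exp_add]; ring_nf
  calc _ = exp (-t ^ 2 / 4) *
        ∫ x, H (2 * k) (x + t / 2) * H (2 * l) (x + -(t / 2)) * exp (-x ^ 2) := by
        rw [← integral_const_mul]
        congr 1 with x
        rw [hweight, ← sub_eq_add_neg]
        ring
    _ = _ := by
        rw [integral_H_add_mul_H_add_mul_exp, show min (2 * k) (2 * l) = 2 * min k l by omega,
          mul_assoc]
        congr 1
        rw [mul_sum, mul_sum]
        refine sum_congr rfl fun i hi => ?_
        have hik : i ≤ 2 * k := by have := mem_range_succ_iff.mp hi; omega
        have hil : i ≤ 2 * l := by have := mem_range_succ_iff.mp hi; omega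
        rw [mul_neg, mul_div_cancel₀ t two_ne_zero, neg_pow t,
          neg_one_pow_sub_of_even (even_two_mul l) hil, neg_pow (2 : ℝ),
          show 2 * k + 2 * l - 2 * i = (2 * k - i) + (2 * l - i) by omega, pow_add]
        ring
end

section
/- In the two-charge harmonic oscillator ensemble with fugacity X, if L denotes the random number of charge-1 particles with generating function E[X^L] = L_{N/2}^{(-1/2)}(-X^2)/L_{N/2}^{(-1/2)}(-1), then Var(L) = 4(N/2) - E[L] - E[L]^2 where E[L] = 2 L_{N/2-1}^{(1/2)}(-1)/L_{N/2}^{(-1/2)}(-1). -/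
/-!
Write `L_J^{(-1/2)}(-x) = ∑ b_k x^k` with positive coefficients `b_k`. Since `L` is bounded, the
generating function identity determines its law: `L = 2k` with probability `b_k / ∑ b`. Both
claims then become identities among the `b_k`: `∑ k b_k = L_{J-1}^{(1/2)}(-1)` is the derivative
identity read off coefficientwise, and `∑ k (k + 1/2) b_k = J ∑ b_k` is the Laguerre equation at
`x = -1`, which telescopes through `(k + 1) (k + 1/2) b_{k+1} = (J - k) b_k`.
-/

open MeasureTheory

open Finset

noncomputable def lagNegCoeff (α : ℝ) (n k : ℕ) : ℝ :=
  Real.Gamma (n + α + 1) / (Real.Gamma (k + α + 1) * (n - k).factorial * k.factorial)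

theorem lag_neg_eq_sum (α : ℝ) (n : ℕ) (x : ℝ) :
    lag α n (-x) = ∑ k ∈ range (n + 1), lagNegCoeff α n k * x ^ k := by
  refine sum_congr rfl fun k _ => ?_
  rw [lagNegCoeff, neg_pow x]
  field_simp
  ring_nf
  rw [pow_mul', neg_one_sq, one_pow, mul_one]

theorem lagNegCoeff_pos {α : ℝ} (hα : -1 < α) (n k : ℕ) : 0 < lagNegCoeff α n k := by
  have hn : 0 < Real.Gamma (n + α + 1) :=
    Real.Gamma_pos_of_pos (by linarith [n.cast_nonneg (α := ℝ)])
  have hk : 0 < Real.Gamma (k + α + 1) :=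
    Real.Gamma_pos_of_pos (by linarith [k.cast_nonneg (α := ℝ)])
  unfold lagNegCoeff
  positivity

theorem lag_neg_pos {α : ℝ} (hα : -1 < α) (n : ℕ) {x : ℝ} (hx : 0 ≤ x) : 0 < lag α n (-x) := by
  rw [lag_neg_eq_sum]
  exact sum_pos' (fun k _ => by have := lagNegCoeff_pos hα n k; positivity)
    ⟨0, by simp, by simpa using lagNegCoeff_pos hα n 0⟩

theorem succ_mul_lagNegCoeff_succ (α : ℝ) (n k : ℕ) :
    (k + 1) * lagNegCoeff α (n + 1) (k + 1) = lagNegCoeff (α + 1) n k := by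
  unfold lagNegCoeff
  rw [Nat.add_sub_add_right, Nat.factorial_succ]
  push_cast
  ring_nf
  field_simp

theorem lagNegCoeff_succ {α : ℝ} (hα : -1 < α) {n k : ℕ} (hk : k < n) :
    (k + 1) * (k + α + 1) * lagNegCoeff α n (k + 1) = (n - k) * lagNegCoeff α n k := by
  have hk0 : (k : ℝ) + α + 1 ≠ 0 := by linarith [k.cast_nonneg (α := ℝ)]
  have hΓ : Real.Gamma ((k + 1 : ℕ) + α + 1) = (k + α + 1) * Real.Gamma (k + α + 1) := by
    rw [← Real.Gamma_add_one hk0]; push_cast; ring_nf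
  have hfac : ((n - k).factorial : ℝ) = (n - k) * (n - (k + 1)).factorial := by
    rw [show n - k = n - (k + 1) + 1 by omega, Nat.factorial_succ]
    push_cast [Nat.cast_sub hk.le, Nat.cast_sub hk]
    ring
  unfold lagNegCoeff
  rw [hΓ, hfac, Nat.factorial_succ]
  have hnk : (n : ℝ) - k ≠ 0 := sub_ne_zero.2 (by exact_mod_cast hk.ne')
  push_cast
  field_simp

/-- The Laguerre equation `x y'' + (α + 1 - x) y' + n y = 0` at `x = -1`, in terms of the
coefficients of `y(-x)`. -/
theorem sum_mul_add_one_mul_lagNegCoeff {α : ℝ} (hα : -1 < α) (n : ℕ) :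
    ∑ k ∈ range (n + 1), k * (k + α + 1) * lagNegCoeff α n k =
      n * ∑ k ∈ range (n + 1), lagNegCoeff α n k := by
  have htel : ∑ k ∈ range (n + 1), (n - k : ℝ) * lagNegCoeff α n k =
      ∑ k ∈ range (n + 1), k * (k + α) * lagNegCoeff α n k := by
    rw [sum_range_succ, sum_range_succ' _ n, sub_self, zero_mul, add_zero]
    simp only [CharP.cast_eq_zero, zero_mul, add_zero]
    refine sum_congr rfl fun k hk => ?_
    rw [← lagNegCoeff_succ hα (mem_range.1 hk)]
    push_cast
    ring
  rw [mul_sum, ← sub_eq_zero, ← sum_sub_distrib, ← sub_eq_zero.2 htel.symm, ← sum_sub_distrib]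
  exact sum_congr rfl fun k _ => by ring

theorem sum_mul_lagNegCoeff (α : ℝ) {n : ℕ} (hn : 1 ≤ n) :
    ∑ k ∈ range (n + 1), k * lagNegCoeff α n k = lag (α + 1) (n - 1) (-1) := by
  obtain ⟨m, rfl⟩ := Nat.exists_eq_add_of_le' hn
  rw [sum_range_succ', lag_neg_eq_sum, Nat.add_sub_cancel]
  simp only [Nat.cast_add, Nat.cast_one, succ_mul_lagNegCoeff_succ, one_pow, mul_one,
    CharP.cast_eq_zero, zero_mul, add_zero]

theorem sum_mul_eq_sum_mul_of_forall_sum_pow_eq {N K : ℕ} {q c : ℕ → ℝ} {e : ℕ → ℕ}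
    (he : ∀ k < K, e k < N)
    (h : ∀ x : ℝ, ∑ n ∈ range N, q n * x ^ n = ∑ k ∈ range K, c k * x ^ e k) (g : ℕ → ℝ) :
    ∑ n ∈ range N, q n * g n = ∑ k ∈ range K, c k * g (e k) := by
  open Polynomial in
  have pair : ∀ (s : Finset ℕ) (a : ℕ → ℝ) (m : ℕ → ℕ), (∀ i ∈ s, m i < N) →
      ∑ n ∈ range N, (∑ i ∈ s, C (a i) * X ^ m i).coeff n * g n = ∑ i ∈ s, a i * g (m i) := by
    intro s a m hm
    simp_rw [finsetSum_coeff, coeff_C_mul_X_pow, sum_mul]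
    rw [sum_comm]
    refine sum_congr rfl fun i hi => ?_
    simp_rw [ite_mul, zero_mul]
    rw [sum_ite_eq', if_pos (mem_range.2 (hm i hi))]
  open Polynomial in
  have hpoly : ∑ n ∈ range N, C (q n) * X ^ n = ∑ k ∈ range K, C (c k) * X ^ e k :=
    Polynomial.funext fun x => by simpa [eval_finsetSum] using h x
  have hP := pair (range N) q (fun n => n) fun n hn => mem_range.1 hn
  beta_reduce at hP
  rwa [hpoly, pair (range K) c e fun k hk => he k (mem_range.1 hk), eq_comm] at hP

theorem integral_eq_sum_range_of_ae_le {ν : Measure ℕ} [IsFiniteMeasure ν] {N : ℕ}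
    (h : ∀ᵐ n ∂ν, n ≤ N) (g : ℕ → ℝ) :
    ∫ n, g n ∂ν = ∑ n ∈ range (N + 1), ν.real {n} * g n := by
  have hsupp : ∀ᵐ n ∂ν, n ∈ (range (N + 1) : Set ℕ) := by
    filter_upwards [h] with n hn
    simpa [Nat.lt_succ_iff] using hn
  conv_lhs => rw [← Measure.restrict_eq_self_of_ae_mem hsupp]
  simp_rw [setIntegral_finset _ IntegrableOn.finset, smul_eq_mul]

theorem aemeasurable_of_integrable_pow {Ω : Type*} [MeasurableSpace Ω] {μ : Measure Ω}
    {L : Ω → ℕ} {r : ℝ} (hr0 : 0 < r) (hr1 : r ≠ 1)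
    (h : Integrable (fun ω => r ^ L ω) μ) : AEMeasurable L μ := by
  have hemb : MeasurableEmbedding (fun n : ℕ => r ^ n) :=
    measurable_from_top.measurableEmbedding (pow_right_injective₀ hr0 hr1)
  exact hemb.aemeasurable_comp_iff.1 h.aemeasurable

theorem integral_comp_eq_sum_of_integral_pow_eq {Ω : Type*} [MeasurableSpace Ω]
    {μ : Measure Ω} [IsFiniteMeasure μ] {L : Ω → ℕ} (hL : AEMeasurable L μ) {N K : ℕ}
    (hLe : ∀ ω, L ω ≤ N) {c : ℕ → ℝ} {e : ℕ → ℕ} (he : ∀ k < K, e k ≤ N)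
    (h : ∀ x : ℝ, ∫ ω, x ^ L ω ∂μ = ∑ k ∈ range K, c k * x ^ e k) (g : ℕ → ℝ) :
    ∫ ω, g (L ω) ∂μ = ∑ k ∈ range K, c k * g (e k) := by
  have hlaw (f : ℕ → ℝ) :
      ∫ ω, f (L ω) ∂μ = ∑ n ∈ range (N + 1), (μ.map L).real {n} * f n := by
    rw [← integral_map hL measurable_from_top.aestronglyMeasurable]
    exact integral_eq_sum_range_of_ae_le
      ((ae_map_iff hL (.of_discrete)).2 (.of_forall hLe)) f
  rw [hlaw]
  exact sum_mul_eq_sum_mul_of_forall_sum_pow_eq (fun k hk => Nat.lt_succ_of_le (he k hk))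
    (fun x => (hlaw _).symm.trans (h x)) g

theorem integral_comp_eq_sum_lagNegCoeff {Ω : Type*} [MeasurableSpace Ω] {μ : Measure Ω}
    [IsFiniteMeasure μ] {J : ℕ} {L : Ω → ℕ} (hLe : ∀ ω, L ω ≤ 2 * J)
    (hgen : ∀ X : ℝ, ∫ ω, X ^ (L ω) ∂μ = lag (-1/2) J (-X ^ 2) / lag (-1/2) J (-1))
    (g : ℕ → ℝ) :
    ∫ ω, g (L ω) ∂μ =
      ∑ k ∈ range (J + 1), lagNegCoeff (-1/2) J k / lag (-1/2) J (-1) * g (2 * k) := by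
  have hα : (-1 : ℝ) < -1/2 := by norm_num
  -- `L` is not assumed measurable: the integral of `(1/2) ^ L` is nonzero, hence `(1/2) ^ L` is
  -- integrable, and `n ↦ (1/2) ^ n` is a measurable embedding.
  have hL : AEMeasurable L μ := by
    refine aemeasurable_of_integrable_pow (r := 1/2) (by norm_num) (by norm_num)
      (.of_integral_ne_zero (hgen _ ▸ (div_pos ?_ ?_).ne')) <;>
    exact lag_neg_pos hα J (by positivity)
  refine integral_comp_eq_sum_of_integral_pow_eq hL hLe (fun k hk => by omega) (fun x => ?_) g
  rw [hgen, lag_neg_eq_sum, sum_div]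
  exact sum_congr rfl fun k _ => by rw [pow_mul]; ring

theorem two_charge_population_variance_general
    {Ω : Type*} [MeasurableSpace Ω] (μ : Measure Ω) [IsProbabilityMeasure μ]
    (J : ℕ) (hJ : 1 ≤ J) (L : Ω → ℕ)
    (hLe : ∀ ω, L ω ≤ 2 * J)
    (hgen : ∀ X : ℝ, ∫ ω, X ^ (L ω) ∂μ = lag (-1/2) J (-X ^ 2) / lag (-1/2) J (-1)) :
    (∫ ω, ((L ω : ℝ)) ^ 2 ∂μ) - (∫ ω, (L ω : ℝ) ∂μ) ^ 2 =
        4 * J - (∫ ω, (L ω : ℝ) ∂μ) - (∫ ω, (L ω : ℝ) ∂μ) ^ 2 ∧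
      (∫ ω, (L ω : ℝ) ∂μ) = 2 * lag (1/2) (J - 1) (-1) / lag (-1/2) J (-1) := by
  have hα : (-1 : ℝ) < -1/2 := by norm_num
  have hD : lag (-1/2) J (-1) = ∑ k ∈ range (J + 1), lagNegCoeff (-1/2) J k := by
    simpa using lag_neg_eq_sum (-1/2) J 1
  have hDpos : 0 < lag (-1/2) J (-1) := by simpa using lag_neg_pos hα J zero_le_one
  have hlaw := integral_comp_eq_sum_lagNegCoeff hLe hgen
  have hmean : ∫ ω, (L ω : ℝ) ∂μ = 2 * lag (1/2) (J - 1) (-1) / lag (-1/2) J (-1) := by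
    rw [hlaw (fun n => (n : ℝ)), show (1/2 : ℝ) = -1/2 + 1 by norm_num,
      ← sum_mul_lagNegCoeff _ hJ, mul_sum, sum_div]
    exact sum_congr rfl fun k _ => by push_cast; ring
  have hsecond : ∫ ω, (L ω : ℝ) ^ 2 ∂μ + ∫ ω, (L ω : ℝ) ∂μ = 4 * J := by
    rw [hlaw (fun n => (n : ℝ) ^ 2), hlaw (fun n => (n : ℝ)), ← sum_add_distrib]
    calc _ = 4 * (∑ k ∈ range (J + 1), k * (k + (-1/2) + 1) * lagNegCoeff (-1/2) J k) /
            lag (-1/2) J (-1) := by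
          rw [mul_sum, sum_div]
          exact sum_congr rfl fun k _ => by push_cast; ring
      _ = 4 * J := by
          rw [sum_mul_add_one_mul_lagNegCoeff hα, ← hD, mul_div_assoc,
            mul_div_cancel_right₀ _ hDpos.ne']
  exact ⟨by linarith, hmean⟩

theorem two_charge_population_variance
    {Ω : Type*} [MeasurableSpace Ω] (μ : Measure Ω) [IsProbabilityMeasure μ]
    (J : ℕ) (hJ : 1 ≤ J) (L : Ω → ℕ)
    (hEven : ∀ ω, Even (L ω)) (hLe : ∀ ω, L ω ≤ 2 * J)
    (hgen : ∀ X : ℝ, ∫ ω, X ^ (L ω) ∂μ = lag (-1/2) J (-X ^ 2) / lag (-1/2) J (-1)) :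
    (∫ ω, ((L ω : ℝ)) ^ 2 ∂μ) - (∫ ω, (L ω : ℝ) ∂μ) ^ 2 =
        4 * J - (∫ ω, (L ω : ℝ) ∂μ) - (∫ ω, (L ω : ℝ) ∂μ) ^ 2 ∧
      (∫ ω, (L ω : ℝ) ∂μ) = 2 * lag (1/2) (J - 1) (-1) / lag (-1/2) J (-1) :=
  two_charge_population_variance_general μ J hJ L hLe hgen
end

section
/- For any real m and as n → ∞, Σ_{k=1}^{n} k^{m - 1/2} e^{4√k} = (1/2) n^m e^{4√n} (1 + O(n^{-1/2})). -/
/-!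
Write `F s x = x ^ s * exp (4 * √x)` (`rpowExpSqrt`). Since `F' m = 2 F (m - 1/2) + m F (m - 1)`,
the mean value theorem gives `F (m - 1/2) k = (F m k - F m (k - 1)) / 2 + O(F (m - 1) k)`.
Telescoping leaves `F m n / 2` plus the sum of the errors. The same comparison, with `m` replaced
by `s + 1/2` and `F (s - 1/2) = o(F s)`, gives the crude bound `∑_{k ≤ n} F s k = O(F (s + 1/2) n)`,
so the errors add up to `O(F (m - 1/2) n)`.
-/

open Real Filter Asymptotics Finset

theorem Asymptotics.IsBigO.sum_range {α : Type*} [NormedAddCommGroup α] {f : ℕ → α} {g : ℕ → ℝ}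
    (h : f =O[atTop] g) (hg : 0 ≤ g) (h'g : Tendsto (fun n => ∑ i ∈ range n, g i) atTop atTop) :
    (fun n => ∑ i ∈ range n, f i) =O[atTop] fun n => ∑ i ∈ range n, g i := by
  obtain ⟨C, hC⟩ := h.bound
  obtain ⟨N, hN⟩ := eventually_atTop.1 hC
  have hhead : (fun _ : ℕ => ∑ i ∈ range N, f i) =O[atTop] fun n => ∑ i ∈ range n, g i :=
    (isLittleO_const_left.2 (Or.inr (tendsto_norm_atTop_atTop.comp h'g))).isBigO
  have htail : (fun n => ∑ i ∈ Ico N n, f i) =O[atTop] fun n => ∑ i ∈ range n, g i := by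
    refine IsBigO.of_bound |C| ?_
    filter_upwards [eventually_ge_atTop N] with n hn
    calc ‖∑ i ∈ Ico N n, f i‖ ≤ ∑ i ∈ Ico N n, |C| * g i :=
          norm_sum_le_of_le _ fun i hi =>
            (hN i (mem_Ico.1 hi).1).trans <| by
              rw [Real.norm_of_nonneg (hg i)]
              exact mul_le_mul_of_nonneg_right (le_abs_self C) (hg i)
      _ ≤ ∑ i ∈ range n, |C| * g i := by
          rw [range_eq_Ico]
          exact sum_le_sum_of_subset_of_nonneg (Ico_subset_Ico (Nat.zero_le N) le_rfl)
            fun i _ _ => mul_nonneg (abs_nonneg C) (hg i)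
      _ = |C| * ‖∑ i ∈ range n, g i‖ := by
          rw [← mul_sum, Real.norm_of_nonneg (sum_nonneg fun i _ => hg i)]
  refine (hhead.add htail).congr' ?_ EventuallyEq.rfl
  filter_upwards [eventually_ge_atTop N] with n hn
  exact sum_range_add_sum_Ico f hn

noncomputable def rpowExpSqrt (s x : ℝ) : ℝ := x ^ s * exp (4 * √x)

theorem rpowExpSqrt_nonneg (s : ℝ) {x : ℝ} (hx : 0 ≤ x) : 0 ≤ rpowExpSqrt s x := by
  unfold rpowExpSqrt; positivity

theorem rpowExpSqrt_le_of_exponent_le {s t x : ℝ} (hx : 1 ≤ x) (hst : s ≤ t) :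
    rpowExpSqrt s x ≤ rpowExpSqrt t x := by
  unfold rpowExpSqrt; gcongr

theorem rpowExpSqrt_le_of_half_le (t : ℝ) {x y : ℝ} (hy : 0 < y) (hyx : y / 2 ≤ x)
    (hxy : x ≤ y) : rpowExpSqrt t x ≤ 2 ^ |t| * rpowExpSqrt t y := by
  have hpow : x ^ t ≤ 2 ^ |t| * y ^ t := by
    rcases le_total 0 t with ht | ht
    · calc x ^ t ≤ y ^ t := rpow_le_rpow (by linarith) hxy ht
        _ ≤ 2 ^ |t| * y ^ t :=
          le_mul_of_one_le_left (by positivity) (one_le_rpow one_le_two (abs_nonneg t))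
    · calc x ^ t ≤ (y / 2) ^ t := rpow_le_rpow_of_nonpos (by positivity) hyx ht
        _ = 2 ^ |t| * y ^ t := by
          rw [abs_of_nonpos ht, div_rpow hy.le zero_le_two, rpow_neg zero_le_two]
          field_simp
  unfold rpowExpSqrt
  calc x ^ t * exp (4 * √x) ≤ (2 ^ |t| * y ^ t) * exp (4 * √y) := by gcongr
    _ = 2 ^ |t| * (y ^ t * exp (4 * √y)) := mul_assoc _ _ _

theorem hasDerivAt_rpowExpSqrt (s : ℝ) {x : ℝ} (hx : 0 < x) :
    HasDerivAt (rpowExpSqrt s) (s * rpowExpSqrt (s - 1) x + 2 * rpowExpSqrt (s - 1 / 2) x) x := by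
  have h : HasDerivAt (fun y => y ^ s * exp (4 * √y))
      (s * x ^ (s - 1) * exp (4 * √x) + x ^ s * (exp (4 * √x) * (4 * (1 / (2 * √x))))) x :=
    (hasDerivAt_rpow_const (Or.inl hx.ne')).mul ((hasDerivAt_sqrt hx.ne').const_mul 4).exp
  refine h.congr_deriv ?_
  have hsqrt : 0 < √x := sqrt_pos.2 hx
  rw [rpowExpSqrt, rpowExpSqrt, rpow_sub hx, rpow_sub hx, rpow_one, ← sqrt_eq_rpow]
  field_simp
  ring

theorem tendsto_rpowExpSqrt_atTop (s : ℝ) : Tendsto (rpowExpSqrt s) atTop atTop := by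
  refine ((tendsto_exp_mul_div_rpow_atTop (-2 * s) 4 four_pos).comp tendsto_sqrt_atTop).congr' ?_
  filter_upwards [eventually_gt_atTop 0] with x hx
  rw [Function.comp_apply, sqrt_eq_rpow, ← rpow_mul hx.le, rpowExpSqrt, ← sqrt_eq_rpow,
    show 1 / 2 * (-2 * s) = -s by ring, rpow_neg hx.le, div_inv_eq_mul, mul_comm]

theorem isLittleO_rpowExpSqrt_sub_half (s : ℝ) :
    rpowExpSqrt (s - 1 / 2) =o[atTop] rpowExpSqrt s := by
  have h := ((isLittleO_one_iff ℝ).2 (tendsto_rpow_neg_atTop (y := 1 / 2) (by norm_num)))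
    |>.mul_isBigO (isBigO_refl (rpowExpSqrt s) atTop)
  refine (h.congr' ?_ (by simp)).trans_isBigO (isBigO_refl _ _)
  filter_upwards [eventually_gt_atTop 0] with x hx
  rw [rpowExpSqrt, rpowExpSqrt, sub_eq_neg_add, rpow_add hx, mul_assoc]

theorem abs_rpowExpSqrt_sub_le (s : ℝ) {x y : ℝ} (hy : 2 ≤ y) (hx : x ∈ Set.Icc (y - 1) y) :
    |rpowExpSqrt s x - rpowExpSqrt s y| ≤
      (|s| + 2) * 2 ^ |s - 1 / 2| * rpowExpSqrt (s - 1 / 2) y := by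
  have hderiv : ∀ z ∈ Set.Icc (y - 1) y, HasDerivWithinAt (rpowExpSqrt s)
      (s * rpowExpSqrt (s - 1) z + 2 * rpowExpSqrt (s - 1 / 2) z) (Set.Icc (y - 1) y) z :=
    fun z hz => (hasDerivAt_rpowExpSqrt s (by linarith [hz.1])).hasDerivWithinAt
  have hbound : ∀ z ∈ Set.Icc (y - 1) y,
      ‖s * rpowExpSqrt (s - 1) z + 2 * rpowExpSqrt (s - 1 / 2) z‖ ≤
        (|s| + 2) * 2 ^ |s - 1 / 2| * rpowExpSqrt (s - 1 / 2) y := by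
    rintro z ⟨hz₁, hz₂⟩
    have hlower : rpowExpSqrt (s - 1) z ≤ rpowExpSqrt (s - 1 / 2) z :=
      rpowExpSqrt_le_of_exponent_le (by linarith) (by linarith)
    have hshift := rpowExpSqrt_le_of_half_le (s - 1 / 2) (by linarith) (by linarith) hz₂
    have hnonneg := rpowExpSqrt_nonneg (s - 1) (by linarith : 0 ≤ z)
    calc ‖s * rpowExpSqrt (s - 1) z + 2 * rpowExpSqrt (s - 1 / 2) z‖
        ≤ |s| * rpowExpSqrt (s - 1) z + 2 * rpowExpSqrt (s - 1 / 2) z := by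
          refine (norm_add_le _ _).trans_eq ?_
          rw [norm_mul, norm_mul, Real.norm_of_nonneg hnonneg,
            Real.norm_of_nonneg (hnonneg.trans hlower), Real.norm_eq_abs, Real.norm_two]
      _ ≤ (|s| + 2) * rpowExpSqrt (s - 1 / 2) z := by nlinarith [abs_nonneg s]
      _ ≤ (|s| + 2) * 2 ^ |s - 1 / 2| * rpowExpSqrt (s - 1 / 2) y := by
          rw [mul_assoc]; gcongr
  have hmvt := (convex_Icc (y - 1) y).norm_image_sub_le_of_norm_hasDerivWithin_le hderiv hbound
    (Set.right_mem_Icc.2 (by linarith)) hx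
  have hdist : ‖x - y‖ ≤ 1 := by
    rw [Real.norm_eq_abs, abs_le]; constructor <;> linarith [hx.1, hx.2]
  rw [← Real.norm_eq_abs]
  exact hmvt.trans (mul_le_of_le_one_right
    (mul_nonneg (by positivity) (rpowExpSqrt_nonneg _ (by linarith))) hdist)

theorem abs_rpowExpSqrt_sub_sub_le (m : ℝ) {y : ℝ} (hy : 2 ≤ y) :
    |rpowExpSqrt m y - rpowExpSqrt m (y - 1) - 2 * rpowExpSqrt (m - 1 / 2) y| ≤
      (|m| + 2 * (|m - 1 / 2| + 2)) * 2 ^ |m - 1| * rpowExpSqrt (m - 1) y := by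
  set c := rpowExpSqrt (m - 1 / 2) y
  set I := Set.Icc (y - 1) y
  have hderiv : ∀ x ∈ I, HasDerivWithinAt (fun x => rpowExpSqrt m x - 2 * c * x)
      (m * rpowExpSqrt (m - 1) x + 2 * (rpowExpSqrt (m - 1 / 2) x - c)) I x := by
    intro x hx
    exact (((hasDerivAt_rpowExpSqrt m (by linarith [hx.1])).sub
      ((hasDerivAt_id x).const_mul (2 * c))).congr_deriv (by ring)).hasDerivWithinAt
  have hbound : ∀ x ∈ I, ‖m * rpowExpSqrt (m - 1) x + 2 * (rpowExpSqrt (m - 1 / 2) x - c)‖ ≤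
      (|m| + 2 * (|m - 1 / 2| + 2)) * 2 ^ |m - 1| * rpowExpSqrt (m - 1) y := by
    intro x hx
    have hshift := rpowExpSqrt_le_of_half_le (m - 1) (by linarith) (by linarith [hx.1]) hx.2
    have hlip := abs_rpowExpSqrt_sub_le (m - 1 / 2) hy hx
    rw [show m - 1 / 2 - 1 / 2 = m - 1 by ring] at hlip
    have hnonneg := rpowExpSqrt_nonneg (m - 1) (by linarith [hx.1] : 0 ≤ x)
    calc ‖m * rpowExpSqrt (m - 1) x + 2 * (rpowExpSqrt (m - 1 / 2) x - c)‖
        ≤ |m| * rpowExpSqrt (m - 1) x + 2 * |rpowExpSqrt (m - 1 / 2) x - c| := by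
          refine (norm_add_le _ _).trans_eq ?_
          simp only [norm_mul, Real.norm_eq_abs, abs_two, abs_of_nonneg hnonneg]
      _ ≤ |m| * (2 ^ |m - 1| * rpowExpSqrt (m - 1) y) +
            2 * ((|m - 1 / 2| + 2) * 2 ^ |m - 1| * rpowExpSqrt (m - 1) y) := by gcongr
      _ = _ := by ring
  have hmvt := (convex_Icc (y - 1) y).norm_image_sub_le_of_norm_hasDerivWithin_le hderiv hbound
    (Set.left_mem_Icc.2 (by linarith)) (Set.right_mem_Icc.2 (by linarith))
  rw [sub_sub_cancel, norm_one, mul_one, Real.norm_eq_abs] at hmvt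
  convert hmvt using 2
  ring

theorem isBigO_rpowExpSqrt_sub_half_sub (m : ℝ) :
    (fun k : ℕ => rpowExpSqrt (m - 1 / 2) (k + 1) - (rpowExpSqrt m (k + 1) - rpowExpSqrt m k) / 2)
      =O[atTop] fun k : ℕ => rpowExpSqrt (m - 1) (k + 1) := by
  refine IsBigO.of_bound ((|m| + 2 * (|m - 1 / 2| + 2)) * 2 ^ |m - 1| / 2) ?_
  filter_upwards [eventually_ge_atTop 1] with k hk
  have hy : (2 : ℝ) ≤ k + 1 := by
    have : (1 : ℝ) ≤ k := by exact_mod_cast hk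
    linarith
  have hkey := abs_rpowExpSqrt_sub_sub_le m hy
  rw [add_sub_cancel_right] at hkey
  rw [Real.norm_eq_abs, Real.norm_of_nonneg (rpowExpSqrt_nonneg _ (by positivity)),
    show ∀ a b d : ℝ, a - (b - d) / 2 = -(b - d - 2 * a) / 2 by intros; ring, abs_div, abs_neg,
    abs_two]
  linarith

theorem tendsto_rpowExpSqrt_natCast_add_one_atTop (s : ℝ) :
    Tendsto (fun k : ℕ => rpowExpSqrt s (k + 1)) atTop atTop :=
  (tendsto_rpowExpSqrt_atTop s).comp
    (tendsto_atTop_add_const_right _ _ tendsto_natCast_atTop_atTop)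

theorem tendsto_sum_range_rpowExpSqrt_atTop (s : ℝ) :
    Tendsto (fun n => ∑ k ∈ range n, rpowExpSqrt s (k + 1)) atTop atTop :=
  (not_summable_iff_tendsto_nat_atTop_of_nonneg fun k => rpowExpSqrt_nonneg s (by positivity)).1
    fun hsum => not_tendsto_nhds_of_tendsto_atTop (tendsto_rpowExpSqrt_natCast_add_one_atTop s) 0
      hsum.tendsto_atTop_zero

theorem isBigO_const_rpowExpSqrt (c s : ℝ) :
    (fun _ : ℕ => c) =O[atTop] fun n : ℕ => rpowExpSqrt s n :=
  (isLittleO_const_left.2 (Or.inr (tendsto_norm_atTop_atTop.comp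
    ((tendsto_rpowExpSqrt_atTop s).comp tendsto_natCast_atTop_atTop)))).isBigO

theorem sum_range_sub_rpowExpSqrt_diff_div_two (s : ℝ) (u : ℕ → ℝ) (n : ℕ) :
    ∑ k ∈ range n, (u k - (rpowExpSqrt s (k + 1) - rpowExpSqrt s k) / 2) =
      ∑ k ∈ range n, u k - (rpowExpSqrt s n - rpowExpSqrt s 0) / 2 := by
  have h := sum_range_sub (fun k : ℕ => rpowExpSqrt s k) n
  push_cast at h
  rw [sum_sub_distrib, ← sum_div, h]

theorem isBigO_sum_range_rpowExpSqrt (s : ℝ) :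
    (fun n : ℕ => ∑ k ∈ range n, rpowExpSqrt s (k + 1)) =O[atTop]
      fun n : ℕ => rpowExpSqrt (s + 1 / 2) n := by
  have hkey := isBigO_rpowExpSqrt_sub_half_sub (s + 1 / 2)
  rw [add_sub_cancel_right, show s + 1 / 2 - 1 = s - 1 / 2 by ring] at hkey
  have hsmall := (hkey.trans_isLittleO ((isLittleO_rpowExpSqrt_sub_half s).comp_tendsto
      (tendsto_atTop_add_const_right _ _ tendsto_natCast_atTop_atTop))).sum_range
    (fun k => rpowExpSqrt_nonneg s (by positivity)) (tendsto_sum_range_rpowExpSqrt_atTop s)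
  simp only [sum_range_sub_rpowExpSqrt_diff_div_two, Function.comp_apply] at hsmall
  have hO := hsmall.right_isBigO_sub
  simp only [sub_sub_cancel] at hO
  exact hO.trans (((isBigO_refl _ _).sub (isBigO_const_rpowExpSqrt _ _)).const_mul_left (1 / 2)
    |>.congr_left fun n => by ring)

theorem sum_rpow_exp_sqrt_asymp (m : ℝ) :
    ∃ C > 0, ∃ N0 : ℕ, ∀ n : ℕ, N0 ≤ n →
      |(∑ k ∈ Finset.Icc 1 n, (k : ℝ) ^ (m - 1/2) * Real.exp (4 * Real.sqrt k)) -
          (1/2) * (n : ℝ) ^ m * Real.exp (4 * Real.sqrt n)| ≤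
        C * (n : ℝ) ^ (m - 1/2) * Real.exp (4 * Real.sqrt n) := by
  have hsum : ∀ n : ℕ, ∑ k ∈ Finset.Icc 1 n, (k : ℝ) ^ (m - 1/2) * Real.exp (4 * Real.sqrt k) =
      ∑ k ∈ range n, rpowExpSqrt (m - 1 / 2) (k + 1) := by
    intro n
    rw [← Finset.Ico_add_one_right_eq_Icc, sum_Ico_eq_sum_range, add_tsub_cancel_right]
    simp [rpowExpSqrt, add_comm]
  have herr := ((isBigO_rpowExpSqrt_sub_half_sub m).sum_range
    (fun k => rpowExpSqrt_nonneg _ (by positivity)) (tendsto_sum_range_rpowExpSqrt_atTop _)).trans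
    (isBigO_sum_range_rpowExpSqrt (m - 1))
  simp only [sum_range_sub_rpowExpSqrt_diff_div_two, show m - 1 + 1 / 2 = m - 1 / 2 by ring] at herr
  obtain ⟨C, hC, hCO⟩ := (herr.sub (isBigO_const_rpowExpSqrt (rpowExpSqrt m 0 / 2) _)).exists_pos
  obtain ⟨N, hN⟩ := eventually_atTop.1 hCO.bound
  refine ⟨C, hC, N, fun n hn => ?_⟩
  have hbound := hN n hn
  rw [Real.norm_eq_abs, Real.norm_of_nonneg (rpowExpSqrt_nonneg _ n.cast_nonneg)] at hbound
  refine Eq.trans_le ?_ (hbound.trans_eq ?_)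
  · rw [hsum, sub_sub, ← add_div, sub_add_cancel, rpowExpSqrt]
    congr 1
    ring
  · rw [rpowExpSqrt, mul_assoc]
end
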